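/- Let A, B be n×n Hermitian matrices such that (λ(B+A) − λ(A)) rearranged in nonincreasing order equals λ(B). Then A and B commute. -/

import Mathlib

open Matrix BigOperators
open scoped ComplexOrder

noncomputable def sortDesc {q : ℕ} (x : Fin q → ℝ) : Fin q → ℝ :=
  fun i => (x ∘ Tuple.sort x) i.rev

noncomputable def sval {m n : ℕ} (F : Matrix (Fin m) (Fin n) ℂ) :
    Fin (min m n) → ℝ :=
  fun i => Real.sqrt (sortDesc (Matrix.posSemidef_conjTranspose_mul_self F).isHermitian.eigenvalues
    ⟨i, lt_of_lt_of_le i.isLt (min_le_right m n)⟩)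

def IsPartialIsometry {m n : ℕ} (X : Matrix (Fin m) (Fin n) ℂ) : Prop :=
  ∀ f ∈ (LinearMap.ker (Matrix.toEuclideanLin X))ᗮ, ‖Matrix.toEuclideanLin X f‖ = ‖f‖

noncomputable def matAbs {m n : ℕ} (F : Matrix (Fin m) (Fin n) ℂ) :
    Matrix (Fin n) (Fin n) ℂ :=
  (Matrix.posSemidef_conjTranspose_mul_self F).1.eigenvectorUnitary.1 *
    diagonal ((↑) ∘ (√·) ∘ (Matrix.posSemidef_conjTranspose_mul_self F).1.eigenvalues) *
    (star (Matrix.posSemidef_conjTranspose_mul_self F).1.eigenvectorUnitary : Matrix (Fin n) (Fin n) ℂ)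

noncomputable def svdSigma {m n : ℕ} (F : Matrix (Fin m) (Fin n) ℂ) :
    Matrix (Fin m) (Fin n) ℂ :=
  fun i j => if h : (i : ℕ) = (j : ℕ) ∧ (i : ℕ) < min m n
    then (sval F ⟨i, h.2⟩ : ℂ) else 0

def IsSVD {m n : ℕ} (F : Matrix (Fin m) (Fin n) ℂ)
    (V : Matrix (Fin m) (Fin m) ℂ) (W : Matrix (Fin n) (Fin n) ℂ) : Prop :=
  V ∈ Matrix.unitaryGroup (Fin m) ℂ ∧ W ∈ Matrix.unitaryGroup (Fin n) ℂ ∧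
    F = V * svdSigma F * Wᴴ

def blockIso {m n : ℕ} (r : ℕ) (S : Matrix (Fin (m - r)) (Fin (n - r)) ℂ) :
    Matrix (Fin m) (Fin n) ℂ :=
  fun i j =>
    if (i : ℕ) < r ∧ (j : ℕ) < r then (if (i : ℕ) = (j : ℕ) then 1 else 0)
    else if h : r ≤ (i : ℕ) ∧ r ≤ (j : ℕ) then
      S ⟨(i : ℕ) - r, by have := i.isLt; omega⟩ ⟨(j : ℕ) - r, by have := j.isLt; omega⟩
    else 0

def submajW {q : ℕ} (x y : Fin q → ℝ) : Prop :=
  ∀ k : ℕ, k ≤ q →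
    (∑ i : Fin q, if (i : ℕ) < k then sortDesc x i else 0) ≤
      (∑ i : Fin q, if (i : ℕ) < k then sortDesc y i else 0)

structure SymmGauge (q : ℕ) where
  Φ : (Fin q → ℝ) → ℝ
  add_le : ∀ x y, Φ (x + y) ≤ Φ x + Φ y
  smul_eq : ∀ (c : ℝ) x, Φ (c • x) = |c| * Φ x
  eq_zero : ∀ x, Φ x = 0 → x = 0
  symm : ∀ (σ : Equiv.Perm (Fin q)) (ε : Fin q → ℝ) (x : Fin q → ℝ),
    (∀ i, ε i = 1 ∨ ε i = -1) → Φ (fun i => ε i * x (σ i)) = Φ x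

def SymmGauge.StrictlyConvex {q : ℕ} (G : SymmGauge q) : Prop :=
  ∀ x y, x ≠ y → G.Φ x = 1 → G.Φ y = 1 →
    ∀ t : ℝ, 0 < t → t < 1 → G.Φ (t • x + (1 - t) • y) < 1

noncomputable def gaugeNorm {m n : ℕ} (G : SymmGauge (min m n))
    (M : Matrix (Fin m) (Fin n) ℂ) : ℝ :=
  G.Φ (sval M)

noncomputable def projMat {m : ℕ} (S : Submodule ℂ (EuclideanSpace ℂ (Fin m))) :
    Matrix (Fin m) (Fin m) ℂ :=
  Matrix.toEuclideanLin.symm (S.subtype ∘ₗ (S.orthogonalProjectionOnto).toLinearMap)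

noncomputable def frobNorm {m n : ℕ} (M : Matrix (Fin m) (Fin n) ℂ) : ℝ :=
  Real.sqrt (∑ i, ∑ j, ‖M i j‖ ^ 2)

def IsMinPI {m n : ℕ} (G : SymmGauge (min m n)) (F : Matrix (Fin m) (Fin n) ℂ)
    (k : ℕ) (X : Matrix (Fin m) (Fin n) ℂ) : Prop :=
  IsPartialIsometry X ∧ X.rank = k ∧
    ∀ Y : Matrix (Fin m) (Fin n) ℂ, IsPartialIsometry Y → Y.rank = k →
      gaugeNorm G (F - X) ≤ gaugeNorm G (F - Y)

def TriConstr {q : ℕ} (k : ℕ) (x : Fin q → ℝ) : Prop :=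
  (∀ j, x j = -1 ∨ x j = 0 ∨ x j = 1) ∧ {j : Fin q | x j ≠ 0}.ncard = k

/-!
Let `a`, `b`, `c` be the eigenvalues of `A`, `B` and `C = B + A` in decreasing order. Since
`B = C - A`, Frobenius norms give `∑ bᵢ² = ‖C - A‖² = ‖C‖² - 2 Re tr (A C) + ‖A‖²`, while the
hypothesis gives `∑ bᵢ² = ∑ (cᵢ - aᵢ)²`; hence `Re tr (A C) = ∑ aᵢ cᵢ`, the equality case of von
Neumann's trace inequality. Summation by parts writes `A = a_n + ∑_{k<n} (a_k - a_{k+1}) P_k`, with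
`P_k` the projection onto the top `k` eigenvectors and nonnegative coefficients, and likewise `C`
with projections `Q_l`. So `∑ aᵢ cᵢ - Re tr (A C)` is a nonnegative combination of the defects
`min k l - Re tr (P_k Q_l) ≥ 0`, and each defect with a nonzero coefficient vanishes. For `k ≤ l`,
`Re tr (P_k Q_l) = tr P_k` forces `(1 - Q_l) P_k = 0`, so `P_k` and `Q_l` commute, and therefore so
do `A` and `C`.
-/

section StarProjection

variable {ι 𝕜 : Type*} [Fintype ι] [DecidableEq ι] [RCLike 𝕜] {P Q : Matrix ι ι 𝕜}

theorem IsStarProjection.trace_sub_trace_mul (hP : IsStarProjection P) (hQ : IsStarProjection Q) :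
    P.trace - (P * Q).trace = (((1 - Q) * P)ᴴ * ((1 - Q) * P)).trace := by
  have hQ' := hQ.one_sub
  rw [conjTranspose_mul, ← star_eq_conjTranspose, ← star_eq_conjTranspose,
    hP.isSelfAdjoint.star_eq, hQ'.isSelfAdjoint.star_eq, Matrix.mul_assoc,
    ← Matrix.mul_assoc (1 - Q), hQ'.isIdempotentElem.eq, trace_mul_comm P ((1 - Q) * P),
    Matrix.mul_assoc, hP.isIdempotentElem.eq, Matrix.sub_mul,
    Matrix.one_mul, trace_sub, trace_mul_comm P]

theorem IsStarProjection.re_trace_mul_le (hP : IsStarProjection P) (hQ : IsStarProjection Q) :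
    RCLike.re (P * Q).trace ≤ RCLike.re P.trace := by
  have h := (RCLike.nonneg_iff.mp (posSemidef_conjTranspose_mul_self ((1 - Q) * P)).trace_nonneg).1
  rw [← hP.trace_sub_trace_mul hQ, map_sub] at h
  linarith

theorem IsStarProjection.commute_of_re_trace_mul_eq (hP : IsStarProjection P)
    (hQ : IsStarProjection Q) (h : RCLike.re (P * Q).trace = RCLike.re P.trace) : Commute P Q := by
  have hnonneg :=
    RCLike.nonneg_iff.mp (posSemidef_conjTranspose_mul_self ((1 - Q) * P)).trace_nonneg
  have hzero : (1 - Q) * P = 0 := by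
    rw [← trace_conjTranspose_mul_self_eq_zero_iff]
    refine RCLike.ext ?_ (by simpa using hnonneg.2)
    rw [← hP.trace_sub_trace_mul hQ, map_sub, h, sub_self, map_zero]
  have hQP : Q * P = P := by
    rw [Matrix.sub_mul, Matrix.one_mul, sub_eq_zero] at hzero
    exact hzero.symm
  have hPQ : P * Q = P := by
    simpa [hP.isSelfAdjoint.star_eq, hQ.isSelfAdjoint.star_eq] using congr(star $hQP)
  exact hPQ.trans hQP.symm

end StarProjection

section UnitaryConjugation

variable {ι 𝕜 : Type*} [Fintype ι] [DecidableEq ι] [RCLike 𝕜]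

lemma Equiv.Perm.permMatrix_mem_unitary (σ : Equiv.Perm ι) :
    σ.permMatrix 𝕜 ∈ unitary (Matrix ι ι 𝕜) := by
  rw [← unitaryGroup, mem_unitaryGroup_iff, star_eq_conjTranspose, conjTranspose_permMatrix,
    ← permMatrix_mul, inv_mul_cancel, permMatrix_one]

lemma Matrix.diagonal_comp_perm (d : ι → 𝕜) (σ : Equiv.Perm ι) :
    diagonal (d ∘ σ) = σ.permMatrix 𝕜 * diagonal d * star (σ.permMatrix 𝕜) := by
  rw [star_eq_conjTranspose, conjTranspose_permMatrix, PEquiv.toMatrix_toPEquiv_mul,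
    PEquiv.mul_toMatrix_toPEquiv]
  simp only [Equiv.Perm.inv_def, Equiv.symm_symm, submatrix_submatrix, Function.comp_id,
    Function.id_comp, submatrix_diagonal_equiv]

noncomputable def conjDiag (U : unitary (Matrix ι ι 𝕜)) : (ι → ℝ) →ₗ[ℝ] Matrix ι ι 𝕜 where
  toFun f := Unitary.conjStarAlgAut 𝕜 _ U (diagonal (RCLike.ofReal ∘ f))
  map_add' f g := by
    rw [← map_add, diagonal_add]
    congr 2
    ext i
    simp
  map_smul' r f := by
    rw [RingHom.id_apply, RCLike.real_smul_eq_coe_smul (K := 𝕜) (E := Matrix ι ι 𝕜), ← map_smul,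
      ← diagonal_smul]
    congr 2
    ext i
    simp

variable (U V : unitary (Matrix ι ι 𝕜))

lemma conjDiag_apply (f : ι → ℝ) :
    conjDiag U f = Unitary.conjStarAlgAut 𝕜 _ U (diagonal (RCLike.ofReal ∘ f)) := rfl

@[simp] lemma conjDiag_one : conjDiag U 1 = 1 := by
  simp [conjDiag_apply, Function.comp_def]

lemma conjDiag_mul (f g : ι → ℝ) : conjDiag U (f * g) = conjDiag U f * conjDiag U g := by
  rw [conjDiag_apply, conjDiag_apply, conjDiag_apply, ← map_mul, diagonal_mul_diagonal]
  congr 2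
  ext i
  simp

lemma isSelfAdjoint_conjDiag (f : ι → ℝ) : IsSelfAdjoint (conjDiag U f) := by
  rw [IsSelfAdjoint, conjDiag_apply, ← map_star, star_eq_conjTranspose, diagonal_conjTranspose]
  congr 2
  ext i
  simp

lemma trace_conjDiag (f : ι → ℝ) : (conjDiag U f).trace = ∑ i, (f i : 𝕜) := by
  rw [conjDiag_apply, Unitary.conjStarAlgAut_apply, trace_mul_cycle, Unitary.coe_star_mul_self,
    Matrix.one_mul, trace_diagonal]
  rfl

lemma re_trace_conjDiag_mul_self (f : ι → ℝ) :
    RCLike.re (conjDiag U f * conjDiag U f).trace = ∑ i, f i ^ 2 := by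
  simp [← conjDiag_mul, trace_conjDiag, sq]

lemma isStarProjection_conjDiag_indicator (s : Set ι) :
    IsStarProjection (conjDiag U (s.indicator 1)) := by
  refine ⟨?_, isSelfAdjoint_conjDiag U _⟩
  rw [IsIdempotentElem, ← conjDiag_mul, ← Set.inter_indicator_one, Set.inter_self]

-- `∑ fᵢ gᵢ - Re tr (A C)` for `A = U diag f U⋆` and `C = V diag g V⋆`: the gap in von Neumann's
-- trace inequality.
noncomputable def traceDefect : (ι → ℝ) →ₗ[ℝ] (ι → ℝ) →ₗ[ℝ] ℝ :=
  LinearMap.mk₂ ℝ (fun f g => f ⬝ᵥ g - RCLike.re (conjDiag U f * conjDiag V g).trace)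
    (fun f f' g => by simp only [map_add, add_dotProduct, Matrix.add_mul, trace_add]; ring)
    (fun r f g => by
      simp only [map_smul, smul_dotProduct, Matrix.smul_mul, trace_smul, RCLike.smul_re,
        smul_eq_mul]
      ring)
    (fun f g g' => by simp only [map_add, dotProduct_add, Matrix.mul_add, trace_add]; ring)
    (fun r f g => by
      simp only [map_smul, dotProduct_smul, Matrix.mul_smul, trace_smul, RCLike.smul_re,
        smul_eq_mul]
      ring)

lemma traceDefect_apply (f g : ι → ℝ) :
    traceDefect U V f g = f ⬝ᵥ g - RCLike.re (conjDiag U f * conjDiag V g).trace := rfl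

lemma traceDefect_comm (f g : ι → ℝ) : traceDefect U V f g = traceDefect V U g f := by
  rw [traceDefect_apply, traceDefect_apply, dotProduct_comm, trace_mul_comm]

@[simp] lemma traceDefect_one_left (g : ι → ℝ) : traceDefect U V 1 g = 0 := by
  simp [traceDefect_apply, trace_conjDiag, dotProduct]

@[simp] lemma traceDefect_one_right (f : ι → ℝ) : traceDefect U V f 1 = 0 := by
  rw [traceDefect_comm, traceDefect_one_left]

lemma two_mul_traceDefect (f g : ι → ℝ) :
    2 * traceDefect U V f g = RCLike.re ((conjDiag V g - conjDiag U f) *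
      (conjDiag V g - conjDiag U f)).trace - ∑ i, (g i - f i) ^ 2 := by
  rw [traceDefect_apply, dotProduct_comm]
  simp only [Matrix.sub_mul, Matrix.mul_sub, trace_sub, map_sub,
    re_trace_conjDiag_mul_self, trace_mul_comm (conjDiag V g), dotProduct,
    sub_sq, mul_assoc, Finset.sum_add_distrib, Finset.sum_sub_distrib, ← Finset.mul_sum]
  ring

variable {U V}

lemma traceDefect_indicator_of_subset {s t : Set ι} (hst : s ⊆ t) :
    traceDefect U V (s.indicator 1) (t.indicator 1) =
      RCLike.re (conjDiag U (s.indicator 1)).trace -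
        RCLike.re (conjDiag U (s.indicator 1) * conjDiag V (t.indicator 1)).trace := by
  have hdot : s.indicator 1 ⬝ᵥ t.indicator 1 = ∑ i, s.indicator (1 : ι → ℝ) i := by
    refine Finset.sum_congr rfl fun i _ => ?_
    by_cases hs : i ∈ s
    · simp [hs, hst hs]
    · simp [hs]
  rw [traceDefect_apply, trace_conjDiag, hdot]
  simp

lemma traceDefect_indicator_nonneg {s t : Set ι} (hst : s ⊆ t ∨ t ⊆ s) :
    0 ≤ traceDefect U V (s.indicator 1) (t.indicator 1) := by
  rcases hst with hst | hts
  · rw [traceDefect_indicator_of_subset hst, sub_nonneg]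
    exact (isStarProjection_conjDiag_indicator U s).re_trace_mul_le
      (isStarProjection_conjDiag_indicator V t)
  · rw [traceDefect_comm, traceDefect_indicator_of_subset hts, sub_nonneg]
    exact (isStarProjection_conjDiag_indicator V t).re_trace_mul_le
      (isStarProjection_conjDiag_indicator U s)

lemma commute_of_traceDefect_indicator_eq_zero {s t : Set ι} (hst : s ⊆ t ∨ t ⊆ s)
    (h : traceDefect U V (s.indicator 1) (t.indicator 1) = 0) :
    Commute (conjDiag U (s.indicator 1)) (conjDiag V (t.indicator 1)) := by
  rcases hst with hst | hts
  · rw [traceDefect_indicator_of_subset hst, sub_eq_zero] at h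
    exact (isStarProjection_conjDiag_indicator U s).commute_of_re_trace_mul_eq
      (isStarProjection_conjDiag_indicator V t) h.symm
  · rw [traceDefect_comm, traceDefect_indicator_of_subset hts, sub_eq_zero] at h
    exact ((isStarProjection_conjDiag_indicator V t).commute_of_re_trace_mul_eq
      (isStarProjection_conjDiag_indicator U s) h.symm).symm

lemma Matrix.IsHermitian.exists_unitary_eq_conjDiag_comp {A : Matrix ι ι 𝕜} (hA : A.IsHermitian)
    (σ : Equiv.Perm ι) : ∃ U, A = conjDiag U (hA.eigenvalues ∘ σ) := by
  let P : unitary (Matrix ι ι 𝕜) := ⟨σ.permMatrix 𝕜, σ.permMatrix_mem_unitary⟩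
  refine ⟨hA.eigenvectorUnitary * star P, ?_⟩
  have hP : diagonal (RCLike.ofReal ∘ hA.eigenvalues ∘ σ) =
      Unitary.conjStarAlgAut 𝕜 _ P (diagonal (RCLike.ofReal ∘ hA.eigenvalues)) :=
    diagonal_comp_perm (RCLike.ofReal ∘ hA.eigenvalues) σ
  rw [conjDiag_apply, Unitary.conjStarAlgAut_mul_apply, ← Unitary.conjStarAlgAut_symm, hP,
    StarAlgEquiv.symm_apply_apply, ← hA.spectral_theorem]

end UnitaryConjugation

theorem Antitone.exists_eq_smul_one_add_sum_indicator {n : ℕ} {a : Fin n → ℝ} (ha : Antitone a) :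
    ∃ (s : ℝ) (x : Fin n → ℝ), 0 ≤ x ∧ a = s • 1 + ∑ k, x k • (Set.Iic k).indicator 1 := by
  cases n with
  | zero => exact ⟨0, 0, le_rfl, Subsingleton.elim _ _⟩
  | succ m =>
    set a' : ℕ → ℝ := fun j => a (Fin.clamp j m)
    have ha' : Antitone a' := fun j j' hj => ha (by simp [Fin.le_iff_val_le_val, Fin.clamp]; omega)
    refine ⟨a (Fin.last m), fun k => a' k - a' (k + 1),
      fun k => sub_nonneg.2 (ha' (Nat.le_succ _)), ?_⟩
    funext i
    have hsum : ∑ k : Fin (m + 1), (a' k - a' (k + 1)) * (Set.Iic k).indicator 1 i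
        = ∑ j ∈ Finset.Ico (i : ℕ) (m + 1), (a' j - a' (j + 1)) := by
      simp only [Set.indicator_apply, Set.mem_Iic, Fin.le_iff_val_le_val, Pi.one_apply, mul_ite,
        mul_one, mul_zero]
      rw [Fin.sum_univ_eq_sum_range (fun j => if (i : ℕ) ≤ j then a' j - a' (j + 1) else 0),
        ← Finset.sum_filter]
      congr 1
      ext j
      simp only [Finset.mem_filter, Finset.mem_range, Finset.mem_Ico]
      omega
    have hi : a' i = a i := by simp [a', Fin.clamp, i.is_le]
    have hlast : a' (m + 1) = a (Fin.last m) := by simp [a', Fin.clamp]; rfl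
    have htel := Finset.sum_Ico_sub (fun j => -a' j) i.is_lt.le
    simp only [neg_sub_neg] at htel
    simp only [Pi.add_apply, Finset.sum_apply, Pi.smul_apply, smul_eq_mul, Pi.one_apply, mul_one,
      hsum, htel, hi, hlast]
    ring

theorem commute_conjDiag_of_traceDefect_eq_zero {𝕜 : Type*} [RCLike 𝕜] {n : ℕ}
    {U V : unitary (Matrix (Fin n) (Fin n) 𝕜)} {a c : Fin n → ℝ} (ha : Antitone a)
    (hc : Antitone c) (h : traceDefect U V a c = 0) : Commute (conjDiag U a) (conjDiag V c) := by
  obtain ⟨s, x, hx, rfl⟩ := ha.exists_eq_smul_one_add_sum_indicator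
  obtain ⟨t, y, hy, rfl⟩ := hc.exists_eq_smul_one_add_sum_indicator
  have hnested (k l : Fin n) : Set.Iic k ⊆ Set.Iic l ∨ Set.Iic l ⊆ Set.Iic k :=
    (le_total k l).imp Set.Iic_subset_Iic.2 Set.Iic_subset_Iic.2
  have hexpand : traceDefect U V (s • 1 + ∑ k, x k • (Set.Iic k).indicator 1)
      (t • 1 + ∑ l, y l • (Set.Iic l).indicator 1) = ∑ k, ∑ l, x k * y l *
        traceDefect U V ((Set.Iic k).indicator 1) ((Set.Iic l).indicator 1) := by
    simp only [map_add, map_sum, map_smul, LinearMap.add_apply, LinearMap.sum_apply,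
      LinearMap.smul_apply, traceDefect_one_left, traceDefect_one_right, smul_eq_mul, mul_zero,
      Finset.sum_const_zero, zero_add, Finset.mul_sum]
    rw [Finset.sum_comm]
    simp only [mul_left_comm, mul_assoc]
  have hterm (k l : Fin n) : x k * y l *
      traceDefect U V ((Set.Iic k).indicator 1) ((Set.Iic l).indicator 1) = 0 := by
    have hnonneg (k l : Fin n) : 0 ≤ x k * y l *
        traceDefect U V ((Set.Iic k).indicator 1) ((Set.Iic l).indicator 1) :=
      mul_nonneg (mul_nonneg (hx k) (hy l)) (traceDefect_indicator_nonneg (hnested k l))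
    rw [hexpand] at h
    exact (Finset.sum_eq_zero_iff_of_nonneg fun l _ => hnonneg k l).1
      ((Finset.sum_eq_zero_iff_of_nonneg fun k _ => Finset.sum_nonneg fun l _ => hnonneg k l).1
        h k (Finset.mem_univ _)) l (Finset.mem_univ _)
  simp only [map_add, map_sum, map_smul, conjDiag_one]
  refine ((Commute.one_left _).smul_left s).add_left (Commute.add_right
    ((Commute.one_right _).smul_right t) (Commute.sum_left _ _ _ fun k _ =>
      Commute.sum_right _ _ _ fun l _ => ?_))
  rcases mul_eq_zero.1 (hterm k l) with hxy | hD
  · rcases mul_eq_zero.1 hxy with h0 | h0 <;> simp [h0]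
  · exact ((commute_of_traceDefect_indicator_eq_zero (hnested k l) hD).smul_left _).smul_right _

lemma antitone_sortDesc {q : ℕ} (x : Fin q → ℝ) : Antitone (sortDesc x) :=
  fun _ _ hij => Tuple.monotone_sort x (Fin.rev_le_rev.mpr hij)

lemma sum_comp_sortDesc {q : ℕ} (x : Fin q → ℝ) (g : ℝ → ℝ) :
    ∑ i, g (sortDesc x i) = ∑ i, g (x i) :=
  (Fin.revPerm.trans (Tuple.sort x)).sum_comp (g ∘ x)

lemma Matrix.IsHermitian.exists_unitary_eq_conjDiag_sortDesc {𝕜 : Type*} [RCLike 𝕜] {n : ℕ}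
    {A : Matrix (Fin n) (Fin n) 𝕜} (hA : A.IsHermitian) :
    ∃ U, A = conjDiag U (sortDesc hA.eigenvalues) :=
  hA.exists_unitary_eq_conjDiag_comp (Fin.revPerm.trans (Tuple.sort _))

theorem stmt7 {n : ℕ} (A B : Matrix (Fin n) (Fin n) ℂ)
    (hA : A.IsHermitian) (hB : B.IsHermitian)
    (h : sortDesc (fun i => sortDesc (hB.add hA).eigenvalues i - sortDesc hA.eigenvalues i)
        = sortDesc hB.eigenvalues) : A * B = B * A := by
  set a := sortDesc hA.eigenvalues
  set c := sortDesc (hB.add hA).eigenvalues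
  obtain ⟨U, hAU⟩ := hA.exists_unitary_eq_conjDiag_sortDesc
  obtain ⟨V, hCV⟩ := (hB.add hA).exists_unitary_eq_conjDiag_sortDesc
  obtain ⟨W, hBW⟩ := hB.exists_unitary_eq_conjDiag_sortDesc
  have hdefect : traceDefect U V a c = 0 := by
    have hfrob := two_mul_traceDefect U V a c
    have hsum := sum_comp_sortDesc (fun i => c i - a i) (· ^ 2)
    rw [← hAU, ← hCV, add_sub_cancel_right, hBW, re_trace_conjDiag_mul_self, ← h] at hfrob
    linarith
  have hcomm := commute_conjDiag_of_traceDefect_eq_zero (antitone_sortDesc _)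
    (antitone_sortDesc _) hdefect
  rw [← hAU, ← hCV] at hcomm
  simpa using (hcomm.sub_right (Commute.refl A)).eq
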